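/- arXiv:2505.23608 — 3 statements merged into one kernel-verified Lean document; each statement's English description precedes it below -/
import Mathlib

section
/- Let A be a complex (d×d) block matrix partitioned as A = [[A_R, a_R, 0],[a_R^T, a_ss, a_V^T],[0, a_V, A_V]] with A_R of size (s-1)×(s-1) and A_V of size (d-s)×(d-s), both invertible, and a_ss ≠ 0. Suppose vectors x_R, x_s (scalar), x_V satisfy A·[x_R; x_s; x_V] = B_d f_d + B_a f_a where B_d = [0; 0; D_d] and B_a = [D_a; 0; 0]. If x_s = 0 and a_R^T A_R^{-1} D_a ≠ 0, then f_a = -(a_V^T A_V^{-1} D_d)(a_R^T A_R^{-1} D_a)^{-1} f_d. -/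
/-!
With the target mass stopped, the outer row blocks decouple: inverting `A_R` and `A_V` gives
`x_R = f_a • A_R⁻¹ D_a` and `x_V = f_d • A_V⁻¹ D_d`, and the middle row, the only one coupling
the two ends, becomes a linear relation between `f_a` and `f_d`.
-/

open Matrix Complex

theorem Matrix.eq_smul_inv_mulVec_of_mulVec_eq_smul {ι R : Type*} [Fintype ι] [DecidableEq ι]
    [CommRing R] {A : Matrix ι ι R} (hA : IsUnit A.det) {x b : ι → R} {c : R}
    (h : A *ᵥ x = c • b) : x = c • (A⁻¹ *ᵥ b) := by
  rw [← mulVec_smul, ← h, mulVec_mulVec, nonsing_inv_mul _ hA, one_mulVec]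

theorem eq_neg_mul_inv_mul_of_mul_add_mul_eq_zero {K : Type*} [Field K] {x y a b : K}
    (ha : a ≠ 0) (h : x * a + y * b = 0) : x = -b * a⁻¹ * y := by
  field_simp
  linear_combination h

theorem stmt_0_general {n m : ℕ}
    (A_R : Matrix (Fin n) (Fin n) ℂ) (A_V : Matrix (Fin m) (Fin m) ℂ)
    (a_R D_a : Fin n → ℂ) (a_V D_d : Fin m → ℂ)
    (a_ss f_a f_d x_s : ℂ) (x_R : Fin n → ℂ) (x_V : Fin m → ℂ)
    (hA_R : IsUnit A_R.det) (hA_V : IsUnit A_V.det)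
    (h1 : A_R *ᵥ x_R + x_s • a_R = f_a • D_a)
    (h2 : a_R ⬝ᵥ x_R + a_ss * x_s + a_V ⬝ᵥ x_V = 0)
    (h3 : x_s • a_V + A_V *ᵥ x_V = f_d • D_d)
    (hxs : x_s = 0)
    (hden : a_R ⬝ᵥ (A_R⁻¹ *ᵥ D_a) ≠ 0) :
    f_a = -(a_V ⬝ᵥ (A_V⁻¹ *ᵥ D_d)) * (a_R ⬝ᵥ (A_R⁻¹ *ᵥ D_a))⁻¹ * f_d := by
  subst hxs
  simp only [zero_smul, add_zero, zero_add, mul_zero] at h1 h2 h3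
  have hx_R := eq_smul_inv_mulVec_of_mulVec_eq_smul hA_R h1
  have hx_V := eq_smul_inv_mulVec_of_mulVec_eq_smul hA_V h3
  rw [hx_R, hx_V, dotProduct_smul, dotProduct_smul, smul_eq_mul, smul_eq_mul] at h2
  exact eq_neg_mul_inv_mul_of_mul_add_mul_eq_zero hden h2

/-- Proposition 1 of the paper (case p < s < d): the block system
`A ⬝ [x_R; x_s; x_V] = B_d f_d + B_a f_a` written out row-block by row-block;
once the target mass is stopped (`x_s = 0`), the absorber force phasor is
uniquely determined. -/
theorem stmt_0 {n m : ℕ}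
    (A_R : Matrix (Fin n) (Fin n) ℂ) (A_V : Matrix (Fin m) (Fin m) ℂ)
    (a_R D_a : Fin n → ℂ) (a_V D_d : Fin m → ℂ)
    (a_ss f_a f_d x_s : ℂ) (x_R : Fin n → ℂ) (x_V : Fin m → ℂ)
    (hA_R : IsUnit A_R.det) (hA_V : IsUnit A_V.det) (hss : a_ss ≠ 0)
    (h1 : A_R *ᵥ x_R + x_s • a_R = f_a • D_a)
    (h2 : a_R ⬝ᵥ x_R + a_ss * x_s + a_V ⬝ᵥ x_V = 0)
    (h3 : x_s • a_V + A_V *ᵥ x_V = f_d • D_d)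
    (hxs : x_s = 0)
    (hden : a_R ⬝ᵥ (A_R⁻¹ *ᵥ D_a) ≠ 0) :
    f_a = -(a_V ⬝ᵥ (A_V⁻¹ *ᵥ D_d)) * (a_R ⬝ᵥ (A_R⁻¹ *ᵥ D_a))⁻¹ * f_d :=
  stmt_0_general A_R A_V a_R D_a a_V D_d a_ss f_a f_d x_s x_R x_V hA_R hA_V h1 h2 h3 hxs hden
end

section
/- Combining the previous identity with the delayed feedback phasor equation u⃗ = g e^{−jωτ} x⃗_a and x⃗_a = −f⃗_a/(m_a ω²), and assuming f⃗_a ≠ 0, the gain–delay pair achieves full suppression if and only if g e^{−jωτ} = Q(ω) where Q(ω) = −m_a ω² [1 − (jωc_a + k_a)(r + 1/(m_a ω²))]. -/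
open Complex

/-- Core equivalence of Proposition 3: with `x⃗_a = −f⃗_a/(m_a ω²)`, `x⃗_p = r f⃗_a`
and `f⃗_a ≠ 0`, the absorber phasor balance under delayed position feedback
`u⃗ = g e^{−jωτ} x⃗_a` holds iff `g e^{−jωτ} = Q(ω)`. -/
theorem stmt_9 (m_a ω c_a k_a : ℝ) (hm : 0 < m_a) (hω : 0 < ω) (hc : 0 ≤ c_a) (hk : 0 < k_a)
    (x_a x_p f_a : ℂ) (r : ℂ) (g τ : ℝ)
    (hxa : x_a = -(f_a / ((m_a : ℂ) * ω^2)))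
    (hxp : x_p = r * f_a)
    (hfa : f_a ≠ 0) :
    (-((m_a : ℂ) * ω^2) * x_a
        = (Complex.I * ω * c_a + k_a) * (x_p - x_a)
          + (g : ℂ) * Complex.exp (-Complex.I * ω * τ) * x_a)
    ↔ (g : ℂ) * Complex.exp (-Complex.I * ω * τ)
        = -((m_a : ℂ) * ω^2) *
            (1 - (Complex.I * ω * c_a + k_a) * (r + 1 / ((m_a : ℂ) * ω^2))) := by
  have hM : ((m_a : ℂ) * ω^2) ≠ 0 := by
    apply mul_ne_zero
    · exact_mod_cast hm.ne'
    · exact_mod_cast (pow_ne_zero 2 hω.ne')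
  subst hxa hxp
  simp only [neg_mul]
  have hQ : -(((m_a : ℂ) * ω^2) *
      (1 - (Complex.I * ω * c_a + k_a) * (r + 1 / ((m_a : ℂ) * ω^2))))
      = -(((m_a : ℂ) * ω^2) - (Complex.I * ω * c_a + k_a) * (r * ((m_a : ℂ) * ω^2) + 1)) := by
    field_simp [show (m_a:ℂ) ≠ 0 by exact_mod_cast hm.ne', show (ω:ℂ) ≠ 0 by exact_mod_cast hω.ne']
  rw [hQ]
  constructor
  · intro h
    field_simp [show (m_a:ℂ) ≠ 0 by exact_mod_cast hm.ne', show (ω:ℂ) ≠ 0 by exact_mod_cast hω.ne'] at h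
    refine mul_left_cancel₀ hfa ?_
    rw [mul_comm (ω:ℂ) I] at h
    linear_combination f_a * h
  · intro h
    field_simp [show (m_a:ℂ) ≠ 0 by exact_mod_cast hm.ne', show (ω:ℂ) ≠ 0 by exact_mod_cast hω.ne']
    rw [mul_comm (ω:ℂ) I]
    linear_combination h
end

section
/- In the three-mass configuration of the previous context, when the target mass m₂ is fully stopped, the maximal elastic potential energies W_{1,max} = (1/2)k₁(k₃² + c₃²ω²)/[(k₂² + c₂²ω²)((−m₃ω² + k₃ + k₄)² + (c₃+c₄)²ω²)]·|f⃗_d|² and W_{3,max} = (1/2)k₃·|f⃗_d|²/[(−m₃ω² + k₃ + k₄)² + (c₃+c₄)²ω²] do not depend on m₁, m₂, m_a, g, or τ; among the masses, they depend only on m₃. -/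
open Complex

/-- Section 4 of the paper: closed-form expressions of `W_{1,max}` and `W_{3,max}`
when the target mass m₂ is fully stopped; they depend on no masses other than `m₃`
(in particular not on `m₁`, `m₂`, `m_a`, nor on the resonator feedback `g`, `τ`). -/
theorem stmt_11 (m₃ k₁ k₂ k₃ k₄ c₂ c₃ c₄ ω : ℝ)
    (hm₃ : 0 < m₃) (hk₁ : 0 < k₁) (hk₂ : 0 < k₂) (hk₃ : 0 < k₃) (hk₄ : 0 < k₄)
    (hc₂ : 0 < c₂) (hc₃ : 0 < c₃) (hc₄ : 0 < c₄) (hω : 0 < ω) (f_d : ℂ)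
    (A_V a_R a_V x₁ x₃ : ℂ)
    (hAV : A_V = -(ω:ℂ)^2 * m₃ + k₃ + k₄ + Complex.I * ω * (c₃ + c₄))
    (haR : a_R = -(k₂:ℂ) - Complex.I * ω * c₂)
    (haV : a_V = -(k₃:ℂ) - Complex.I * ω * c₃)
    (hAV0 : A_V ≠ 0) (haR0 : a_R ≠ 0)
    (hx₁ : x₁ = a_V / (a_R * A_V) * f_d)
    (hx₃ : x₃ = -(f_d / A_V)) :
    (1/2) * k₁ * (‖x₁‖)^2
      = (1/2) * k₁ * (k₃^2 + c₃^2 * ω^2)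
          / ((k₂^2 + c₂^2 * ω^2) * ((-m₃ * ω^2 + k₃ + k₄)^2 + (c₃ + c₄)^2 * ω^2))
          * (‖f_d‖)^2
    ∧ (1/2) * k₃ * (‖x₃‖)^2
      = (1/2) * k₃ * (‖f_d‖)^2
          / ((-m₃ * ω^2 + k₃ + k₄)^2 + (c₃ + c₄)^2 * ω^2) := by
  have hAVsq : (‖A_V‖)^2 = (-m₃ * ω^2 + k₃ + k₄)^2 + (c₃ + c₄)^2 * ω^2 := by
    rw [Complex.sq_norm, hAV, Complex.normSq_apply]
    simp [Complex.add_re, Complex.add_im, Complex.mul_re, Complex.mul_im,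
      ← Complex.ofReal_pow]
    ring
  have haRsq : (‖a_R‖)^2 = k₂^2 + c₂^2 * ω^2 := by
    rw [Complex.sq_norm, haR, Complex.normSq_apply]
    simp [Complex.sub_re, Complex.sub_im, Complex.mul_re, Complex.mul_im]
    ring
  have haVsq : (‖a_V‖)^2 = k₃^2 + c₃^2 * ω^2 := by
    rw [Complex.sq_norm, haV, Complex.normSq_apply]
    simp [Complex.sub_re, Complex.sub_im, Complex.mul_re, Complex.mul_im]
    ring
  have hAVa : ‖A_V‖ ≠ 0 := norm_ne_zero_iff.mpr hAV0
  have haRa : ‖a_R‖ ≠ 0 := norm_ne_zero_iff.mpr haR0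
  constructor
  · rw [hx₁, norm_mul, norm_div, norm_mul, ← haVsq, ← haRsq, ← hAVsq]
    field_simp
  · rw [hx₃, norm_neg, norm_div, ← hAVsq]
    field_simp
end
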